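/- arXiv:2604.20635 — 4 statements merged into one kernel-verified Lean document; each statement's English description precedes it below -/
import Mathlib

section
/- Let ℓ = ℓ(u,ρ) be a smooth Lagrangian density on ℝⁿ × (0,∞), and for two states (u₊,ρ₊), (u₋,ρ₋) at a point of a shock surface with unit normal n and normal speed v_s, set m± := ∂ℓ/∂u(u±,ρ±), E± := m±·u± − ℓ(u±,ρ±), p± := ℓ(u±,ρ±) − ρ±∂ℓ/∂ρ(u±,ρ±), and let λ± ∈ ℝ, and let a ∈ ℝ and b ∈ ℝⁿ be common values (a := ∂ₜw, b := ∇w, continuous across the shock), with D_tw± := a + u±·b. Assume: (a) the mass jump condition v_s[[ρ]] = [[ρu]]·n; (b) the relation D_tw± = −∂ℓ/∂ρ(u±,ρ±); (c) for each side, v_s m± = (m± ⊗ u±)n − λ± n + (u±·n − v_s) ρ± b; (d) the interface relation −ℓ(u₊,ρ₊) + ℓ(u₋,ρ₋) = [[λ + ρ D_tw]]. Then the energy dissipation identity holds: v_s[[E]] − [[(E+p)u]]·n = v_s[[λ]] − [[λu]]·n. -/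
open scoped RealInnerProductSpace

/-- Energy dissipation identity at a point of a shock surface for a
barotropic Lagrangian density `ℓ = ℓ(u,ρ)`.  With `m± = ∂ℓ/∂u`, `E± = m±·u± - ℓ±`,
`p± = ℓ± - ρ± ∂ℓ/∂ρ±`, interface multipliers `λ±`, and continuous values `a = ∂ₜw`,
`b = ∇w` with material derivatives `D_t w± = a + u±·b`, the hypotheses
(a) `v_s[[ρ]] = [[ρu]]·n`, (b) `D_t w± = -∂ℓ/∂ρ±`,
(c) `v_s m± = (m± ⊗ u±)n - λ± n + (u±·n - v_s) ρ± b`,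
(d) `-ℓ₊ + ℓ₋ = [[λ + ρ D_t w]]`
imply `v_s[[E]] - [[(E+p)u]]·n = v_s[[λ]] - [[λu]]·n`. -/
theorem stmt_10 {d : ℕ}
    (ℓ : EuclideanSpace ℝ (Fin d) × ℝ → ℝ) (hℓ : ContDiff ℝ (⊤ : ℕ∞) ℓ)
    (up um : EuclideanSpace ℝ (Fin d)) (ρp ρm : ℝ) (hρp : 0 < ρp) (hρm : 0 < ρm)
    (nv : EuclideanSpace ℝ (Fin d)) (hn : ‖nv‖ = 1) (vs : ℝ)
    (lp lm a : ℝ) (b : EuclideanSpace ℝ (Fin d))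
    (mp mm : EuclideanSpace ℝ (Fin d))
    (hmp : mp = gradient (fun v => ℓ (v, ρp)) up)
    (hmm : mm = gradient (fun v => ℓ (v, ρm)) um)
    (lρp lρm : ℝ)
    (hlρp : lρp = deriv (fun r => ℓ (up, r)) ρp)
    (hlρm : lρm = deriv (fun r => ℓ (um, r)) ρm)
    (Ep Em pp pm Dtwp Dtwm : ℝ)
    (hEp : Ep = ⟪mp, up⟫ - ℓ (up, ρp)) (hEm : Em = ⟪mm, um⟫ - ℓ (um, ρm))
    (hpp : pp = ℓ (up, ρp) - ρp * lρp) (hpm : pm = ℓ (um, ρm) - ρm * lρm)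
    (hDtwp : Dtwp = a + ⟪up, b⟫) (hDtwm : Dtwm = a + ⟪um, b⟫)
    -- (a) Rankine–Hugoniot condition for mass
    (hmass : vs * (ρp - ρm) = ⟪ρp • up - ρm • um, nv⟫)
    -- (b) critical condition for δρ
    (hwp : Dtwp = -lρp) (hwm : Dtwm = -lρm)
    -- (c) one-sided momentum relations on the shock
    (hcp : vs • mp = ⟪up, nv⟫ • mp - lp • nv + ((⟪up, nv⟫ - vs) * ρp) • b)
    (hcm : vs • mm = ⟪um, nv⟫ • mm - lm • nv + ((⟪um, nv⟫ - vs) * ρm) • b)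
    -- (d) interface relation
    (hint : -ℓ (up, ρp) + ℓ (um, ρm) = (lp + ρp * Dtwp) - (lm + ρm * Dtwm)) :
    vs * (Ep - Em) - ⟪(Ep + pp) • up - (Em + pm) • um, nv⟫
      = vs * (lp - lm) - ⟪lp • up - lm • um, nv⟫ := by
  have hlp : lρp = -(a + ⟪up, b⟫) := by rw [← hDtwp, hwp]; ring
  have hlm : lρm = -(a + ⟪um, b⟫) := by rw [← hDtwm, hwm]; ring
  have hp' := congrArg (fun x => (⟪x, up⟫ : ℝ)) hcp
  have hm' := congrArg (fun x => (⟪x, um⟫ : ℝ)) hcm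
  simp only [inner_smul_left, inner_add_left, inner_sub_left, conj_trivial,
    real_inner_comm nv up, real_inner_comm b up, real_inner_comm nv um,
    real_inner_comm b um] at hp' hm'
  rw [real_inner_comm up nv, real_inner_comm up b] at hp'
  rw [real_inner_comm um nv, real_inner_comm um b] at hm'
  simp only [inner_sub_left, real_inner_smul_left] at hmass ⊢
  subst hEp hEm hpp hpm hlp hlm hDtwp hDtwm
  linear_combination hp' - hm' + vs * hint + a * hmass
end

section
/- Let ℓ = ℓ(u,ρ,s) be a smooth Lagrangian density on ℝⁿ × (0,∞) × ℝ, and for two states (u±,ρ±,s±,ς±) at a point of a shock surface with unit normal n and normal speed v_s, set m± := ∂ℓ/∂u(u±,ρ±,s±), E± := m±·u± − ℓ±, p± := ℓ± − ρ±∂ℓ/∂ρ(u±,ρ±,s±) − s±∂ℓ/∂s(u±,ρ±,s±), where ℓ± := ℓ(u±,ρ±,s±). Let a, c ∈ ℝ and b, d ∈ ℝⁿ be common values continuous across the shock (a = ∂ₜw, b = ∇w, c = ∂ₜγ, d = ∇γ), with D_tw± := a + u±·b and D_tγ± := c + u±·d. Assume: (a) v_s[[ρ]] = [[ρu]]·n;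 (b) v_s[[s−ς]] = [[(s−ς)u]]·n; (c) D_tw± = −∂ℓ/∂ρ(u±,ρ±,s±) and D_tγ± = −∂ℓ/∂s(u±,ρ±,s±); (d) for each side, v_s m± = (m± ⊗ u±)n − ς±(∂ℓ/∂s)(u±,ρ±,s±) n + (u±·n − v_s)(ρ± b + (s±−ς±) d); (e) [[−ℓ]] = [[ρ D_tw + (s−ς) D_tγ]]. Then the Rankine–Hugoniot condition for energy holds: v_s[[E]] − [[(E+p)u]]·n = 0. -/
open scoped RealInnerProductSpace

/-- Rankine–Hugoniot condition for energy at a point of a shock surface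
for the full compressible Euler system with Lagrangian density `ℓ = ℓ(u,ρ,s)`.  With
`m± = ∂ℓ/∂u`, `E± = m±·u± - ℓ±`, `p± = ℓ± - ρ±∂ℓ/∂ρ - s±∂ℓ/∂s`, entropy-production
variables `ς±`, and continuous values `a = ∂ₜw`, `b = ∇w`, `c = ∂ₜγ`, `d = ∇γ` with
material derivatives `D_t w± = a + u±·b`, `D_t γ± = c + u±·d`, the hypotheses
(a) `v_s[[ρ]] = [[ρu]]·n`, (b) `v_s[[s-ς]] = [[(s-ς)u]]·n`,
(c) `D_t w± = -∂ℓ/∂ρ` and `D_t γ± = -∂ℓ/∂s`,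
(d) `v_s m± = (m± ⊗ u±)n - ς±(∂ℓ/∂s) n + (u±·n - v_s)(ρ± b + (s±-ς±) d)`,
(e) `[[-ℓ]] = [[ρ D_t w + (s-ς) D_t γ]]`
imply `v_s[[E]] - [[(E+p)u]]·n = 0`. -/
theorem stmt_11 {k : ℕ}
    (ℓ : EuclideanSpace ℝ (Fin k) × ℝ × ℝ → ℝ) (hℓ : ContDiff ℝ (⊤ : ℕ∞) ℓ)
    (up um : EuclideanSpace ℝ (Fin k)) (ρp ρm : ℝ) (hρp : 0 < ρp) (hρm : 0 < ρm)
    (sp sm' ςp ςm : ℝ)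
    (nv : EuclideanSpace ℝ (Fin k)) (hn : ‖nv‖ = 1) (vs : ℝ)
    (a c : ℝ) (b dd : EuclideanSpace ℝ (Fin k))
    (mp mm : EuclideanSpace ℝ (Fin k))
    (hmp : mp = gradient (fun v => ℓ (v, ρp, sp)) up)
    (hmm : mm = gradient (fun v => ℓ (v, ρm, sm')) um)
    (lρp lρm lsp lsm : ℝ)
    (hlρp : lρp = deriv (fun r => ℓ (up, r, sp)) ρp)
    (hlρm : lρm = deriv (fun r => ℓ (um, r, sm')) ρm)
    (hlsp : lsp = deriv (fun σ => ℓ (up, ρp, σ)) sp)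
    (hlsm : lsm = deriv (fun σ => ℓ (um, ρm, σ)) sm')
    (Ep Em pp pm Dtwp Dtwm Dtγp Dtγm : ℝ)
    (hEp : Ep = ⟪mp, up⟫ - ℓ (up, ρp, sp)) (hEm : Em = ⟪mm, um⟫ - ℓ (um, ρm, sm'))
    (hpp : pp = ℓ (up, ρp, sp) - ρp * lρp - sp * lsp)
    (hpm : pm = ℓ (um, ρm, sm') - ρm * lρm - sm' * lsm)
    (hDtwp : Dtwp = a + ⟪up, b⟫) (hDtwm : Dtwm = a + ⟪um, b⟫)
    (hDtγp : Dtγp = c + ⟪up, dd⟫) (hDtγm : Dtγm = c + ⟪um, dd⟫)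
    -- (a) Rankine–Hugoniot condition for mass
    (hmass : vs * (ρp - ρm) = ⟪ρp • up - ρm • um, nv⟫)
    -- (b) Rankine–Hugoniot condition for s - ς
    (hentr : vs * ((sp - ςp) - (sm' - ςm)) = ⟪(sp - ςp) • up - (sm' - ςm) • um, nv⟫)
    -- (c) critical conditions for δρ and δs
    (hwp : Dtwp = -lρp) (hwm : Dtwm = -lρm)
    (hγp : Dtγp = -lsp) (hγm : Dtγm = -lsm)
    -- (d) one-sided momentum relations on the shock
    (hcp : vs • mp = ⟪up, nv⟫ • mp - (ςp * lsp) • nv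
        + (⟪up, nv⟫ - vs) • (ρp • b + (sp - ςp) • dd))
    (hcm : vs • mm = ⟪um, nv⟫ • mm - (ςm * lsm) • nv
        + (⟪um, nv⟫ - vs) • (ρm • b + (sm' - ςm) • dd))
    -- (e) interface relation
    (hint : -ℓ (up, ρp, sp) - (-ℓ (um, ρm, sm'))
        = (ρp * Dtwp + (sp - ςp) * Dtγp) - (ρm * Dtwm + (sm' - ςm) * Dtγm)) :
    vs * (Ep - Em) - ⟪(Ep + pp) • up - (Em + pm) • um, nv⟫ = 0 := by
  subst hEp hEm hpp hpm hDtwp hDtwm hDtγp hDtγm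
  have h1 := congrArg (fun x : EuclideanSpace ℝ (Fin k) => (⟪x, up⟫ : ℝ)) hcp
  have h2 := congrArg (fun x : EuclideanSpace ℝ (Fin k) => (⟪x, um⟫ : ℝ)) hcm
  simp only [inner_add_left, inner_sub_left, real_inner_smul_left] at h1 h2 hmass hentr ⊢
  simp only [real_inner_comm up nv, real_inner_comm up b, real_inner_comm up dd,
    real_inner_comm um nv, real_inner_comm um b, real_inner_comm um dd] at h1 h2
  linear_combination h1 - h2 + vs * hint + a * hmass + c * hentr
    + (⟪up, nv⟫ * ρp) * hwp - (⟪um, nv⟫ * ρm) * hwm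
    + (⟪up, nv⟫ * (sp - ςp)) * hγp - (⟪um, nv⟫ * (sm' - ςm)) * hγm
end

section
/- Let ℓ = ℓ(u,ρ,s) be a smooth Lagrangian density on ℝⁿ × (0,∞) × ℝ, and for two states (u±,ρ±,s±,ς±) with entropy fluxes j_s± ∈ ℝⁿ at a point of a shock surface with unit normal n and normal speed v_s, set m± := ∂ℓ/∂u(u±,ρ±,s±), E± := m±·u± − ℓ±, p± := ℓ± − ρ±∂ℓ/∂ρ − s±∂ℓ/∂s, T± := −∂ℓ/∂s(u±,ρ±,s±), where ℓ± := ℓ(u±,ρ±,s±). Let a, c ∈ ℝ and b, d ∈ ℝⁿ be common values continuous across the shock (a = ∂ₜw, b = ∇w, c = ∂ₜγ, d = ∇γ), with D_tw± := a + u±·b and D_tγ± := c + u±·d. Assume: (a) v_s[[ρ]] = [[ρu]]·n; (b) v_s[[s−ς]] = [[(s−ς)u + j_s]]·n; (c) D_tw± = −∂ℓ/∂ρ and D_tγ± = −∂ℓ/∂s on each side; (d) for each side, v_s m± = (m± ⊗ u±)n − ς±(∂ℓ/∂s) n + (j_s±·n) d + (u±·n − v_s)(ρ± b + (s±−ς±)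 d); (e) [[−ℓ]] = [[ρ D_tw + (s−ς) D_tγ]]. Then the Rankine–Hugoniot condition for energy with heat conduction holds: v_s[[E]] − [[(E+p)u + T j_s]]·n = 0. -/
open scoped RealInnerProductSpace

/-- Rankine–Hugoniot condition for energy with heat conduction at a point
of a shock surface for the Lagrangian density `ℓ = ℓ(u,ρ,s)` with entropy fluxes `j_s±`.
With `m± = ∂ℓ/∂u`, `E± = m±·u± - ℓ±`, `p± = ℓ± - ρ±∂ℓ/∂ρ - s±∂ℓ/∂s`, `T± = -∂ℓ/∂s`,
entropy-production variables `ς±`, and continuous values `a = ∂ₜw`, `b = ∇w`, `c = ∂ₜγ`,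
`d = ∇γ` with `D_t w± = a + u±·b`, `D_t γ± = c + u±·d`, the hypotheses
(a) `v_s[[ρ]] = [[ρu]]·n`, (b) `v_s[[s-ς]] = [[(s-ς)u + j_s]]·n`,
(c) `D_t w± = -∂ℓ/∂ρ` and `D_t γ± = -∂ℓ/∂s`,
(d) `v_s m± = (m± ⊗ u±)n - ς±(∂ℓ/∂s) n + (j_s±·n) d + (u±·n - v_s)(ρ± b + (s±-ς±) d)`,
(e) `[[-ℓ]] = [[ρ D_t w + (s-ς) D_t γ]]`
imply `v_s[[E]] - [[(E+p)u + T j_s]]·n = 0`. -/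
theorem stmt_12 {k : ℕ}
    (ℓ : EuclideanSpace ℝ (Fin k) × ℝ × ℝ → ℝ) (hℓ : ContDiff ℝ (⊤ : ℕ∞) ℓ)
    (up um : EuclideanSpace ℝ (Fin k)) (ρp ρm : ℝ) (hρp : 0 < ρp) (hρm : 0 < ρm)
    (sp sm' ςp ςm : ℝ) (jsp jsm : EuclideanSpace ℝ (Fin k))
    (nv : EuclideanSpace ℝ (Fin k)) (hn : ‖nv‖ = 1) (vs : ℝ)
    (a c : ℝ) (b dd : EuclideanSpace ℝ (Fin k))
    (mp mm : EuclideanSpace ℝ (Fin k))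
    (hmp : mp = gradient (fun v => ℓ (v, ρp, sp)) up)
    (hmm : mm = gradient (fun v => ℓ (v, ρm, sm')) um)
    (lρp lρm lsp lsm : ℝ)
    (hlρp : lρp = deriv (fun r => ℓ (up, r, sp)) ρp)
    (hlρm : lρm = deriv (fun r => ℓ (um, r, sm')) ρm)
    (hlsp : lsp = deriv (fun σ => ℓ (up, ρp, σ)) sp)
    (hlsm : lsm = deriv (fun σ => ℓ (um, ρm, σ)) sm')
    (Ep Em pp pm Tp Tm Dtwp Dtwm Dtγp Dtγm : ℝ)
    (hEp : Ep = ⟪mp, up⟫ - ℓ (up, ρp, sp)) (hEm : Em = ⟪mm, um⟫ - ℓ (um, ρm, sm'))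
    (hpp : pp = ℓ (up, ρp, sp) - ρp * lρp - sp * lsp)
    (hpm : pm = ℓ (um, ρm, sm') - ρm * lρm - sm' * lsm)
    (hTp : Tp = -lsp) (hTm : Tm = -lsm)
    (hDtwp : Dtwp = a + ⟪up, b⟫) (hDtwm : Dtwm = a + ⟪um, b⟫)
    (hDtγp : Dtγp = c + ⟪up, dd⟫) (hDtγm : Dtγm = c + ⟪um, dd⟫)
    -- (a) Rankine–Hugoniot condition for mass
    (hmass : vs * (ρp - ρm) = ⟪ρp • up - ρm • um, nv⟫)
    -- (b) Rankine–Hugoniot condition for s - ς with entropy flux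
    (hentr : vs * ((sp - ςp) - (sm' - ςm))
        = ⟪((sp - ςp) • up + jsp) - ((sm' - ςm) • um + jsm), nv⟫)
    -- (c) critical conditions for δρ and δs
    (hwp : Dtwp = -lρp) (hwm : Dtwm = -lρm)
    (hγp : Dtγp = -lsp) (hγm : Dtγm = -lsm)
    -- (d) one-sided momentum relations on the shock
    (hcp : vs • mp = ⟪up, nv⟫ • mp - (ςp * lsp) • nv + ⟪jsp, nv⟫ • dd
        + (⟪up, nv⟫ - vs) • (ρp • b + (sp - ςp) • dd))
    (hcm : vs • mm = ⟪um, nv⟫ • mm - (ςm * lsm) • nv + ⟪jsm, nv⟫ • dd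
        + (⟪um, nv⟫ - vs) • (ρm • b + (sm' - ςm) • dd))
    -- (e) interface relation
    (hint : -ℓ (up, ρp, sp) - (-ℓ (um, ρm, sm'))
        = (ρp * Dtwp + (sp - ςp) * Dtγp) - (ρm * Dtwm + (sm' - ςm) * Dtγm)) :
    vs * (Ep - Em)
      - ⟪((Ep + pp) • up + Tp • jsp) - ((Em + pm) • um + Tm • jsm), nv⟫ = 0 := by
  subst hEp hEm hpp hpm hTp hTm hDtwp hDtwm hDtγp hDtγm
  have Hp : vs * ⟪mp, up⟫
      = ⟪up, nv⟫ * ⟪mp, up⟫ - (ςp * lsp) * ⟪up, nv⟫ + ⟪jsp, nv⟫ * ⟪up, dd⟫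
        + (⟪up, nv⟫ - vs) * (ρp * ⟪up, b⟫ + (sp - ςp) * ⟪up, dd⟫) := by
    have h := congrArg (fun v : EuclideanSpace ℝ (Fin k) => ⟪up, v⟫) hcp
    simp only [inner_add_right, inner_sub_right, real_inner_smul_right] at h
    linear_combination h + (vs - ⟪up, nv⟫) * real_inner_comm up mp
  have Hm : vs * ⟪mm, um⟫
      = ⟪um, nv⟫ * ⟪mm, um⟫ - (ςm * lsm) * ⟪um, nv⟫ + ⟪jsm, nv⟫ * ⟪um, dd⟫
        + (⟪um, nv⟫ - vs) * (ρm * ⟪um, b⟫ + (sm' - ςm) * ⟪um, dd⟫) := by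
    have h := congrArg (fun v : EuclideanSpace ℝ (Fin k) => ⟪um, v⟫) hcm
    simp only [inner_add_right, inner_sub_right, real_inner_smul_right] at h
    linear_combination h + (vs - ⟪um, nv⟫) * real_inner_comm um mm
  simp only [inner_sub_left, inner_add_left, real_inner_smul_left] at hmass hentr ⊢
  linear_combination Hp - Hm + a * hmass + c * hentr + vs * hint
    + (ρp * ⟪up, nv⟫) * hwp - (ρm * ⟪um, nv⟫) * hwm
    + ((sp - ςp) * ⟪up, nv⟫ + ⟪jsp, nv⟫) * hγp
    - ((sm' - ςm) * ⟪um, nv⟫ + ⟪jsm, nv⟫) * hγm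
end

section
/- For every real γ > 1, one has 2^γ > γ + 1, and consequently −3 + 2γ/(γ−1) − 2γ/((γ−1)(2^γ − 1)) ≠ −1. In other words, for the stationary shock of the one-dimensional polytropic barotropic Euler system with p(ρ) = Kρ^γ, K = 2/(2^γ−1), left state (1,2) and right state (2,1), the energy dissipation rate (E_R+p_R)u_R − (E_L+p_L)u_L never equals the rate of change of length u_R − u_L = −1; hence the dissipation potential cannot be chosen proportional to the volume functional for any γ > 1. -/
/-- For every real `γ > 1` one has `2^γ > γ + 1`, and consequently the
energy dissipation rate `-3 + 2γ/(γ-1) - 2γ/((γ-1)(2^γ-1))` across the stationary shock of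
the 1D polytropic barotropic Euler system (left state `(1,2)`, right state `(2,1)`,
`K = 2/(2^γ-1)`) never equals the rate of change of length `u_R - u_L = -1`;
hence the dissipation potential cannot be chosen proportional to the volume functional. -/
theorem stmt_17 (γ : ℝ) (hγ : 1 < γ) :
    (2 : ℝ) ^ γ > γ + 1 ∧
      -3 + 2 * γ / (γ - 1) - 2 * γ / ((γ - 1) * ((2 : ℝ) ^ γ - 1)) ≠ -1 := by
  have h1 : (2 : ℝ) ^ γ > γ + 1 := by
    have := one_add_mul_self_lt_rpow_one_add (by norm_num : (-1:ℝ) ≤ 1) one_ne_zero hγ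
    norm_num at this
    linarith
  refine ⟨h1, ?_⟩
  have hd : (0:ℝ) < γ - 1 := by linarith
  have hA : (0:ℝ) < (2:ℝ)^γ - 1 := by linarith
  intro h
  have hd' : (γ - 1) ≠ 0 := ne_of_gt hd
  have hA' : ((2:ℝ)^γ - 1) ≠ 0 := ne_of_gt hA
  field_simp at h
  nlinarith [h1, hd, hA]
end
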